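/- For all integers n ≥ 1, (1+1/(2n))^{-3/2} ≤ √(nπ) · C(2n+1,n)/2^{2n+1} ≤ 1. -/

import Mathlib

/-!
Wallis' product `W n` satisfies `(2n+1)/(2n+2) · π/2 ≤ W n ≤ π/2`, and from
`W n = 2^(4n) (n!)^4 / ((2n)!^2 (2n+1))` one gets `b² · W n = (2n+1)/(4(n+1)²)` for
`b = C(2n+1,n)/2^(2n+1)`. Hence `nπb²` lies between `n(2n+1)/(2(n+1)²)` and `n/(n+1) ≤ 1`.
The lower bound dominates `(2n/(2n+1))³ = (1 + 1/(2n))⁻³`, because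
`16 n² (n+1)² = ((2n+1)² - 1)² ≤ (2n+1)⁴`; taking square roots gives the claim.
-/

open Real Real.Wallis

lemma sq_choose_div_two_pow_mul_W (n : ℕ) :
    (((2 * n + 1).choose n : ℝ) / 2 ^ (2 * n + 1)) ^ 2 * W n
      = (2 * n + 1) / (4 * (n + 1) ^ 2) := by
  rw [W_eq_factorial_ratio, Nat.cast_choose ℝ (by omega : n ≤ 2 * n + 1),
    show 2 * n + 1 - n = n + 1 by omega, Nat.factorial_succ (2 * n), Nat.factorial_succ n]
  push_cast
  field_simp
  ring

lemma mul_pi_mul_sq_choose_div_two_pow_eq (n : ℕ) :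
    n * π * (((2 * n + 1).choose n : ℝ) / 2 ^ (2 * n + 1)) ^ 2
      = π / 2 / W n * (n * (2 * n + 1) / (2 * (n + 1) ^ 2)) := by
  rw [eq_div_of_mul_eq (W_pos n).ne' (sq_choose_div_two_pow_mul_W n)]
  field_simp
  ring

lemma one_le_pi_div_two_div_W (n : ℕ) : 1 ≤ π / 2 / W n :=
  (one_le_div (W_pos n)).mpr (W_le n)

lemma pi_div_two_div_W_le (n : ℕ) : π / 2 / W n ≤ (2 * n + 2) / (2 * n + 1) := by
  have h := le_W n
  rw [div_mul_eq_mul_div, div_le_iff₀ (by positivity)] at h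
  rw [div_le_iff₀ (W_pos n), div_mul_eq_mul_div, le_div_iff₀ (by positivity)]
  linear_combination h

lemma mul_pi_mul_sq_choose_div_two_pow_le (n : ℕ) :
    n * π * (((2 * n + 1).choose n : ℝ) / 2 ^ (2 * n + 1)) ^ 2 ≤ n / (n + 1) := by
  rw [mul_pi_mul_sq_choose_div_two_pow_eq]
  calc π / 2 / W n * (n * (2 * n + 1) / (2 * (n + 1) ^ 2))
      ≤ (2 * n + 2) / (2 * n + 1) * (n * (2 * n + 1) / (2 * (n + 1) ^ 2)) :=
        mul_le_mul_of_nonneg_right (pi_div_two_div_W_le n) (by positivity)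
    _ = (n : ℝ) / (n + 1) := by field_simp

lemma le_mul_pi_mul_sq_choose_div_two_pow (n : ℕ) :
    n * (2 * n + 1) / (2 * (n + 1) ^ 2) ≤
      n * π * (((2 * n + 1).choose n : ℝ) / 2 ^ (2 * n + 1)) ^ 2 := by
  rw [mul_pi_mul_sq_choose_div_two_pow_eq]
  exact le_mul_of_one_le_left (by positivity) (one_le_pi_div_two_div_W n)

lemma two_mul_div_two_mul_add_one_pow_three_le {x : ℝ} (hx : 0 ≤ x) :
    (2 * x / (2 * x + 1)) ^ 3 ≤ x * (2 * x + 1) / (2 * (x + 1) ^ 2) := by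
  rw [div_pow, div_le_div_iff₀ (by positivity) (by positivity)]
  have : (4 * x * (x + 1)) ^ 2 ≤ (2 * x + 1) ^ 4 := by nlinarith [sq_nonneg (2 * x + 1)]
  nlinarith

lemma rpow_neg_three_halves {t : ℝ} (ht : 0 ≤ t) : t ^ (-(3 : ℝ) / 2) = √(t⁻¹ ^ 3) := by
  rw [sqrt_eq_rpow, ← rpow_natCast, ← rpow_mul (by positivity), inv_rpow ht, ← rpow_neg ht]
  norm_num

theorem stmt_15 (n : ℕ) (hn : 1 ≤ n) :
    (1 + 1 / (2 * n : ℝ)) ^ (-(3 : ℝ) / 2) ≤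
      Real.sqrt ((n : ℝ) * Real.pi) * (((2 * n + 1).choose n : ℝ) / 2 ^ (2 * n + 1)) ∧
    Real.sqrt ((n : ℝ) * Real.pi) * (((2 * n + 1).choose n : ℝ) / 2 ^ (2 * n + 1)) ≤ 1 := by
  have hn₀ : (0 : ℝ) < n := Nat.cast_pos.mpr hn
  have hsqrt : √(n * π) * (((2 * n + 1).choose n : ℝ) / 2 ^ (2 * n + 1))
      = √(n * π * (((2 * n + 1).choose n : ℝ) / 2 ^ (2 * n + 1)) ^ 2) := by
    rw [sqrt_mul' _ (sq_nonneg _), sqrt_sq (by positivity)]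
  have hbase : (1 + 1 / (2 * n : ℝ))⁻¹ = 2 * n / (2 * n + 1) := by
    field_simp
  rw [hsqrt, rpow_neg_three_halves (by positivity), hbase]
  refine ⟨sqrt_le_sqrt ?_, sqrt_le_one.mpr ?_⟩
  · exact (two_mul_div_two_mul_add_one_pow_three_le hn₀.le).trans
      (le_mul_pi_mul_sq_choose_div_two_pow n)
  · exact (mul_pi_mul_sq_choose_div_two_pow_le n).trans
      (div_le_one_of_le₀ (by linarith) (by positivity))
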